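/- Let H be a proper subgroup of a finite group G and V an F H-module, char F ∤ |G|. Then b(G, Ind_H^G V) ≥ β(H, V), where b(G,W) is the top degree of the coinvariant algebra S(W)/S(W)_+^G S(W). -/

import Mathlib

/-!
Let `pr : W → V` be the projection of `W = Ind_H^G V` onto its summand `V` along the other
summands `c • V`, `c ≠ 1`: it is `H`-equivariant and kills `g • V` for every `g ∉ H`. Fix
`g₀ ∉ H`. The map `D = pr_* - (pr ∘ g₀)_* : S(W) → S(V)` satisfies `D(r s) = D(r) pr_*(s)` for
`G`-invariant `s`, so after averaging over `H` it sends the Hilbert ideal of `W` into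
`(S(V)₊^H)²`, while it sends `ι_* q` back to `q` for every positive-degree `H`-invariant `q`.
Every form of degree above `b(G,W)` lies in the Hilbert ideal; here the `sSup` defining
`b(G,W)` is a genuine maximum because each `xᵢ^|G|` lies in the Hilbert ideal, `xᵢ` being a root
of the monic orbit polynomial `∏_g (T - g xᵢ)` with invariant coefficients. Hence every
homogeneous `H`-invariant of degree above `b(G,W)` is decomposable, and by graded Nakayama
`S(V)^H` is generated in degrees at most `b(G,W)`.
-/

noncomputable section
open MvPolynomial

variable {F : Type} [Field F]

/-- The algebra homomorphism between polynomial algebras (viewed as symmetric algebras)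
induced by a linear map between the spaces of variables (the degree one components). -/
noncomputable def algOf {α β : Type} [Fintype α] [Fintype β] [DecidableEq α]
    (f : (α → F) →ₗ[F] (β → F)) :
    MvPolynomial α F →ₐ[F] MvPolynomial β F :=
  aeval fun j => ∑ i, f (Pi.single j 1) i • X i

/-- The embedding of the space of linear forms into the polynomial algebra. -/
noncomputable def lin {β : Type} [Fintype β] (w : β → F) : MvPolynomial β F :=
  ∑ i, w i • X i

/-- The subalgebra of `G`-invariants of the symmetric algebra of a representation. -/
def invariants {G : Type} [Group G] {α : Type} [Fintype α] [DecidableEq α]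
    (ρ : Representation F G (α → F)) : Subalgebra F (MvPolynomial α F) where
  carrier := {p | ∀ g : G, algOf (ρ g) p = p}
  mul_mem' := fun ha hb g => by rw [map_mul, ha g, hb g]
  add_mem' := fun ha hb g => by rw [map_add, ha g, hb g]
  algebraMap_mem' := fun r g => (algOf (ρ g)).commutes r

variable {G : Type} [Group G] {α : Type} [Fintype α] [DecidableEq α]

/-- The invariant ring is generated as an `F`-algebra in degrees at most `d`. -/
def genLE (ρ : Representation F G (α → F)) (d : ℕ) : Prop :=
  Algebra.adjoin F {p : MvPolynomial α F | p ∈ invariants ρ ∧ p.totalDegree ≤ d}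
    = invariants ρ

/-- The Noether number `β(G,W)` of a representation. -/
def noether (ρ : Representation F G (α → F)) : ℕ := sInf {d | genLE ρ d}

/-- The Hilbert ideal: the ideal of `S(W)` generated by the invariants of positive degree. -/
def hilbertIdeal (ρ : Representation F G (α → F)) : Ideal (MvPolynomial α F) :=
  Ideal.span {p | p ∈ invariants ρ ∧ constantCoeff p = 0}

/-- `b(G,W)`: the top degree of the algebra of coinvariants `S(W)/S(W)₊^G S(W)`. -/
def coinvTop (ρ : Representation F G (α → F)) : ℕ :=
  sSup {d | ∃ p : MvPolynomial α F, p.IsHomogeneous d ∧ p ∉ hilbertIdeal ρ}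

/-- `b_k(G,W)`: the top degree of `S(W)/((S(W)₊^G)^k S(W))`. -/
def coinvTopK (ρ : Representation F G (α → F)) (k : ℕ) : ℕ :=
  sSup {d | ∃ p : MvPolynomial α F, p.IsHomogeneous d ∧ p ∉ (hilbertIdeal ρ) ^ k}

/-- The span of all products of `k` positive-degree invariants,
i.e. `(S(W)₊^G)^k` computed inside the invariant ring. -/
def prodPow (ρ : Representation F G (α → F)) (k : ℕ) : Submodule F (MvPolynomial α F) :=
  Submodule.span F {x | ∃ f : Fin k → MvPolynomial α F,
    (∀ i, f i ∈ invariants ρ ∧ constantCoeff (f i) = 0) ∧ x = ∏ i, f i}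

/-- The `k`-th Noether number `β_k(G,W)`, the top degree of `S(W)^G/(S(W)₊^G)^{k+1}`. -/
def noetherK (ρ : Representation F G (α → F)) (k : ℕ) : ℕ :=
  sSup {d | ∃ p, p ∈ invariants ρ ∧ p.IsHomogeneous d ∧ p ∉ prodPow ρ (k+1)}

/-- `β(G)`: the supremum of the Noether numbers over all finite dimensional modules. -/
def noetherSup (F G : Type) [Field F] [Group G] : ℕ∞ :=
  ⨆ (n : ℕ) (ρ : Representation F G (Fin n → F)), (noether ρ : ℕ∞)

/-- `b(G)`: the supremum of `b(G,W)` over all finite dimensional modules. -/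
def coinvSup (F G : Type) [Field F] [Group G] : ℕ∞ :=
  ⨆ (n : ℕ) (ρ : Representation F G (Fin n → F)), (coinvTop ρ : ℕ∞)

/-- `β_k(G)`: the supremum of the `k`-th Noether numbers over all modules. -/
def noetherKSup (F G : Type) [Field F] [Group G] (k : ℕ) : ℕ∞ :=
  ⨆ (n : ℕ) (ρ : Representation F G (Fin n → F)), (noetherK ρ k : ℕ∞)

theorem Polynomial.Monic.pow_natDegree_mem {R : Type*} [CommRing R] {I : Ideal R}
    {P : Polynomial R} (hP : P.Monic) {x : R} (hx : P.eval x = 0)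
    (hI : ∀ k < P.natDegree, P.coeff k ∈ I) : x ^ P.natDegree ∈ I := by
  rw [hP.as_sum, Polynomial.eval_add, Polynomial.eval_pow, Polynomial.eval_X,
    Polynomial.eval_finsetSum] at hx
  rw [eq_neg_of_add_eq_zero_left hx]
  refine neg_mem (Ideal.sum_mem _ fun k hk => ?_)
  simpa using Ideal.mul_mem_right _ _ (hI k (Finset.mem_range.mp hk))

theorem MvPolynomial.IsHomogeneous.mem_of_X_pow_mem {κ R : Type*} [Fintype κ] [CommRing R]
    {I : Ideal (MvPolynomial κ R)} {n : ℕ} (hX : ∀ i, X i ^ n ∈ I) {p : MvPolynomial κ R}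
    {d : ℕ} (hp : p.IsHomogeneous d) (hd : Fintype.card κ * n < d) : p ∈ I := by
  rw [← support_sum_monomial_coeff p]
  refine Ideal.sum_mem _ fun v hv => ?_
  have hdeg : ∑ _i : κ, n < ∑ i, v i := by
    rw [← Finsupp.degree_eq_sum, Finsupp.degree_apply, ← hp.degree_eq_sum_deg_support hv]
    simpa using hd
  obtain ⟨i, -, hi⟩ := Finset.exists_lt_of_sum_lt hdeg
  have hle : Finsupp.single i n ≤ v := Finsupp.single_le_iff.mpr hi.le
  have hsplit :
      monomial v (coeff v p) = monomial (v - Finsupp.single i n) (coeff v p) * X i ^ n := by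
    rw [X_pow_eq_monomial, monomial_mul, mul_one, tsub_add_cancel_of_le hle]
  exact hsplit ▸ Ideal.mul_mem_left _ _ (hX i)

attribute [local instance] MvPolynomial.gradedAlgebra in
theorem MvPolynomial.homogeneousComponent_mul {κ R : Type*} [CommSemiring R]
    (p q : MvPolynomial κ R) (e : ℕ) :
    homogeneousComponent e (p * q) = ∑ x ∈ Finset.HasAntidiagonal.antidiagonal e,
      homogeneousComponent x.1 p * homogeneousComponent x.2 q := by
  simp only [← decomposition.decompose'_apply]
  rw [← DirectSum.coe_mul_apply_eq_sum_antidiagonal]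
  exact congrArg
    (fun x : DirectSum ℕ fun i => homogeneousSubmodule κ R i => (x e : MvPolynomial κ R))
    (DirectSum.decompose_mul (homogeneousSubmodule κ R) p q)

theorem iSupIndep.isCompl_biSup_ne {ι α : Type*} [CompleteLattice α] {f : ι → α}
    (hf : iSupIndep f) (htop : ⨆ i, f i = ⊤) (i : ι) :
    IsCompl (f i) (⨆ (j) (_ : j ≠ i), f j) :=
  ⟨iSupIndep_def.mp hf i, codisjoint_iff.mpr (by rw [← iSup_split_single f i, htop])⟩

namespace Subgroup.IsComplement

variable {G : Type} [Group G] {H : Subgroup G} {C : Set G}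

theorem eq_one_of_mem (hC : IsComplement C (H : Set G)) (h1 : (1 : G) ∈ C) {c : G}
    (hcC : c ∈ C) (hcH : c ∈ H) : c = 1 := by
  rw [← (hC.equiv_fst_eq_self_iff_mem H.one_mem).mpr hcC]
  exact (hC.coe_equiv_fst_eq_one_iff_mem h1).mpr hcH

theorem exists_ne_one_mul_eq (hC : IsComplement C (H : Set G)) (h1 : (1 : G) ∈ C) {g : G}
    (hg : g ∉ H) : ∃ c ∈ C, c ≠ 1 ∧ ∃ t ∈ H, c * t = g :=
  ⟨(hC.equiv g).1, (hC.equiv g).1.2, fun h => hg ((hC.coe_equiv_fst_eq_one_iff_mem h1).mp h),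
    (hC.equiv g).2, (hC.equiv g).2.2, hC.equiv_fst_mul_equiv_snd g⟩

end Subgroup.IsComplement

theorem Subgroup.natCast_card_ne_zero {G : Type} [Group G] [Fintype G] (H : Subgroup G)
    [Fintype H] {R : Type} [Semiring R] (hG : (Fintype.card G : R) ≠ 0) :
    (Fintype.card H : R) ≠ 0 := by
  rw [Fintype.card_eq_nat_card] at hG ⊢
  exact ne_zero_of_dvd_ne_zero hG (Nat.cast_dvd_cast (Subgroup.card_subgroup_dvd_card H))

section LinearSubstitution

variable {κ κ' κ'' : Type} [Fintype κ] [Fintype κ'] [Fintype κ'']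

theorem lin_eq_linearCombination : (lin : (κ → F) → MvPolynomial κ F) =
    Fintype.linearCombination F (X : κ → MvPolynomial κ F) := by
  ext w
  simp [lin, Fintype.linearCombination_apply]

theorem constantCoeff_lin (w : κ → F) : constantCoeff (lin w) = 0 := by
  simp [lin, smul_eq_C_mul]

theorem isHomogeneous_lin (w : κ → F) : (lin w).IsHomogeneous 1 :=
  IsHomogeneous.sum _ _ _ fun i _ => by
    simpa [smul_eq_C_mul] using isHomogeneous_C_mul_X (w i) i

variable [DecidableEq κ]

theorem algOf_X (f : (κ → F) →ₗ[F] (κ' → F)) (j : κ) :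
    algOf f (X j) = lin (f (Pi.single j 1)) :=
  aeval_X _ j

theorem algOf_lin (f : (κ → F) →ₗ[F] (κ' → F)) (w : κ → F) :
    algOf f (lin w) = lin (f w) := by
  rw [lin_eq_linearCombination]
  suffices (algOf f).toLinearMap ∘ₗ Fintype.linearCombination F X =
      Fintype.linearCombination F X ∘ₗ f from LinearMap.congr_fun this w
  refine LinearMap.pi_ext' fun j => LinearMap.ext_ring ?_
  simp [algOf_X, lin_eq_linearCombination]

theorem algOf_comp [DecidableEq κ'] (g : (κ' → F) →ₗ[F] (κ'' → F))
    (f : (κ → F) →ₗ[F] (κ' → F)) : algOf (g ∘ₗ f) = (algOf g).comp (algOf f) :=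
  algHom_ext fun j => by
    rw [AlgHom.comp_apply, algOf_X, algOf_X, algOf_lin, LinearMap.comp_apply]

theorem algOf_id : algOf (LinearMap.id : (κ → F) →ₗ[F] (κ → F)) = AlgHom.id F _ :=
  algHom_ext fun j => by
    simp [algOf_X, lin_eq_linearCombination, Fintype.linearCombination_apply_single]

theorem algOf_zero (p : MvPolynomial κ F) :
    algOf (0 : (κ → F) →ₗ[F] (κ' → F)) p = C (constantCoeff p) := by
  simpa [algOf, lin] using aeval_zero' (R := F) (S₁ := MvPolynomial κ' F) p

theorem constantCoeff_algOf (f : (κ → F) →ₗ[F] (κ' → F)) (p : MvPolynomial κ F) :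
    constantCoeff (algOf f p) = constantCoeff p := by
  induction p using MvPolynomial.induction_on with
  | C a => simp
  | add p q hp hq => simp [hp, hq]
  | mul_X p j hp => simp [hp, algOf_X, constantCoeff_lin]

theorem MvPolynomial.IsHomogeneous.algOf {p : MvPolynomial κ F} {n : ℕ} (hp : p.IsHomogeneous n)
    (f : (κ → F) →ₗ[F] (κ' → F)) : (_root_.algOf f p).IsHomogeneous n := by
  have := hp.aeval _ fun j => isHomogeneous_lin (f (Pi.single j 1))
  rwa [one_mul] at this

theorem homogeneousComponent_algOf (f : (κ → F) →ₗ[F] (κ' → F)) (p : MvPolynomial κ F)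
    (e : ℕ) : homogeneousComponent e (algOf f p) = algOf f (homogeneousComponent e p) := by
  have hcomp (b : ℕ) : homogeneousComponent e (algOf f (homogeneousComponent b p)) =
      if e = b then algOf f (homogeneousComponent b p) else 0 :=
    homogeneousComponent_of_mem ((homogeneousComponent_isHomogeneous b p).algOf f)
  conv_lhs => rw [← sum_homogeneousComponent p]
  rw [map_sum, map_sum, Finset.sum_congr rfl fun b _ => hcomp b, Finset.sum_ite_eq]
  split_ifs with he
  · rfl
  · rw [homogeneousComponent_eq_zero _ _ (by simpa [Nat.lt_succ_iff] using he), map_zero]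

end LinearSubstitution

section PolynomialRepresentation

variable {K : Type} [Group K] {κ : Type} [Fintype κ] [DecidableEq κ]

theorem algOf_apply_algOf (τ : Representation F K (κ → F)) (g h : K) (p : MvPolynomial κ F) :
    algOf (τ g) (algOf (τ h) p) = algOf (τ (g * h)) p := by
  rw [map_mul, Module.End.mul_eq_comp, algOf_comp, AlgHom.comp_apply]

def polyRep (τ : Representation F K (κ → F)) : Representation F K (MvPolynomial κ F) where
  toFun g := (algOf (τ g)).toLinearMap
  map_one' := by
    rw [map_one]
    exact congrArg AlgHom.toLinearMap algOf_id
  map_mul' g h := LinearMap.ext fun p => (algOf_apply_algOf τ g h p).symm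

variable (τ : Representation F K (κ → F))

theorem polyRep_apply (g : K) (p : MvPolynomial κ F) : polyRep τ g p = algOf (τ g) p := rfl

variable [Fintype K] [Invertible (Fintype.card K : F)]

theorem averageMap_polyRep_apply (p : MvPolynomial κ F) :
    (polyRep τ).averageMap p = ⅟(Fintype.card K : F) • ∑ g : K, algOf (τ g) p := by
  simp [Representation.averageMap, GroupAlgebra.average, polyRep_apply]

theorem averageMap_polyRep_mem_invariants (p : MvPolynomial κ F) :
    (polyRep τ).averageMap p ∈ invariants τ :=
  (polyRep τ).averageMap_invariant p

theorem averageMap_polyRep_of_mem {p : MvPolynomial κ F} (hp : p ∈ invariants τ) :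
    (polyRep τ).averageMap p = p :=
  (polyRep τ).averageMap_id p hp

theorem averageMap_polyRep_mul_left {a : MvPolynomial κ F} (ha : a ∈ invariants τ)
    (p : MvPolynomial κ F) : (polyRep τ).averageMap (a * p) = a * (polyRep τ).averageMap p := by
  simp only [averageMap_polyRep_apply, map_mul, ha _, ← Finset.mul_sum, mul_smul_comm]

theorem constantCoeff_averageMap_polyRep (p : MvPolynomial κ F) :
    constantCoeff ((polyRep τ).averageMap p) = constantCoeff p := by
  rw [averageMap_polyRep_apply, smul_eq_C_mul, map_mul, constantCoeff_C, map_sum]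
  simp only [constantCoeff_algOf, Finset.sum_const, Finset.card_univ, nsmul_eq_mul, ← mul_assoc,
    invOf_mul_self, one_mul]

end PolynomialRepresentation

section

variable {K : Type} [Group K] {κ : Type} [Fintype κ] [DecidableEq κ]

theorem mul_mem_prodPow_two {τ : Representation F K (κ → F)} {a b : MvPolynomial κ F}
    (ha : a ∈ invariants τ) (ha₀ : constantCoeff a = 0)
    (hb : b ∈ invariants τ) (hb₀ : constantCoeff b = 0) : a * b ∈ prodPow τ 2 :=
  Submodule.subset_span ⟨![a, b], Fin.forall_fin_two.mpr ⟨⟨ha, ha₀⟩, ⟨hb, hb₀⟩⟩,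
    by simp [Fin.prod_univ_two]⟩

theorem constantCoeff_eq_zero_of_mem_hilbertIdeal {τ : Representation F K (κ → F)}
    {p : MvPolynomial κ F} (hp : p ∈ hilbertIdeal τ) : constantCoeff p = 0 :=
  (Ideal.span_le (I := RingHom.ker constantCoeff).mpr fun _ hq => hq.2) hp

end

section OrbitPolynomial

variable {G : Type} [Group G] [Fintype G] {κ : Type} [Fintype κ] [DecidableEq κ]
  (σ : Representation F G (κ → F))

def orbitPolynomial (p : MvPolynomial κ F) : Polynomial (MvPolynomial κ F) :=
  ∏ g : G, (Polynomial.X - Polynomial.C (algOf (σ g) p))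

variable (p : MvPolynomial κ F)

theorem orbitPolynomial_monic : (orbitPolynomial σ p).Monic :=
  Polynomial.monic_prod_of_monic _ _ fun _ _ => Polynomial.monic_X_sub_C _

theorem natDegree_orbitPolynomial : (orbitPolynomial σ p).natDegree = Fintype.card G := by
  rw [orbitPolynomial, Polynomial.natDegree_prod_of_monic _ _ fun _ _ =>
    Polynomial.monic_X_sub_C _]
  simp

theorem eval_orbitPolynomial_self : (orbitPolynomial σ p).eval p = 0 := by
  rw [orbitPolynomial, Polynomial.eval_prod]
  refine Finset.prod_eq_zero (Finset.mem_univ 1) ?_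
  rw [map_one, Module.End.one_eq_id, algOf_id]
  simp

theorem coeff_orbitPolynomial_mem_invariants (k : ℕ) :
    (orbitPolynomial σ p).coeff k ∈ invariants σ := fun h => by
  suffices (orbitPolynomial σ p).map (algOf (σ h)).toRingHom = orbitPolynomial σ p by
    simpa using congrArg (Polynomial.coeff · k) this
  simp only [orbitPolynomial, Polynomial.map_prod, Polynomial.map_sub, Polynomial.map_X,
    Polynomial.map_C, AlgHom.toRingHom_eq_coe, RingHom.coe_coe, algOf_apply_algOf]
  exact Equiv.prod_comp (Equiv.mulLeft h) fun g => Polynomial.X - Polynomial.C (algOf (σ g) p)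

theorem constantCoeff_coeff_orbitPolynomial (hp : constantCoeff p = 0) {k : ℕ}
    (hk : k < Fintype.card G) : constantCoeff ((orbitPolynomial σ p).coeff k) = 0 := by
  suffices (orbitPolynomial σ p).map constantCoeff = Polynomial.X ^ Fintype.card G by
    simpa [Polynomial.coeff_X_pow, hk.ne] using congrArg (Polynomial.coeff · k) this
  simp [orbitPolynomial, Polynomial.map_prod, constantCoeff_algOf, hp]

theorem X_pow_card_mem_hilbertIdeal (i : κ) :
    (X i : MvPolynomial κ F) ^ Fintype.card G ∈ hilbertIdeal σ := by
  rw [← natDegree_orbitPolynomial σ (X i)]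
  refine (orbitPolynomial_monic σ _).pow_natDegree_mem (eval_orbitPolynomial_self σ _)
    fun k hk => Ideal.subset_span ⟨coeff_orbitPolynomial_mem_invariants σ _ k,
      constantCoeff_coeff_orbitPolynomial σ _ (constantCoeff_X F i) ?_⟩
  rwa [natDegree_orbitPolynomial] at hk

end OrbitPolynomial

theorem mem_hilbertIdeal_of_coinvTop_lt {G : Type} [Group G] [Fintype G] {κ : Type} [Fintype κ]
    [DecidableEq κ] (σ : Representation F G (κ → F)) {p : MvPolynomial κ F} {d : ℕ}
    (hp : p.IsHomogeneous d) (hd : coinvTop σ < d) : p ∈ hilbertIdeal σ := by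
  have hbdd : BddAbove {d | ∃ p : MvPolynomial κ F, p.IsHomogeneous d ∧ p ∉ hilbertIdeal σ} :=
    ⟨Fintype.card κ * Fintype.card G, fun _ ⟨q, hq, hq'⟩ =>
      not_lt.mp fun he => hq' (hq.mem_of_X_pow_mem (X_pow_card_mem_hilbertIdeal σ) he)⟩
  by_contra h
  exact hd.not_ge (le_csSup hbdd ⟨p, hp, h⟩)

section Generation

variable {K : Type} [Group K] {κ : Type} [Fintype κ] [DecidableEq κ]
  {τ : Representation F K (κ → F)}

theorem homogeneousComponent_mem_invariants {p : MvPolynomial κ F} (hp : p ∈ invariants τ)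
    (e : ℕ) : homogeneousComponent e p ∈ invariants τ := fun g => by
  rw [← homogeneousComponent_algOf, hp g]

theorem homogeneousComponent_mem_of_mem_prodPow_two {S : Subalgebra F (MvPolynomial κ F)}
    {e : ℕ} (hS : ∀ a < e, ∀ p ∈ invariants τ, p.IsHomogeneous a → p ∈ S)
    {q : MvPolynomial κ F} (hq : q ∈ prodPow τ 2) : homogeneousComponent e q ∈ S := by
  induction hq using Submodule.span_induction with
  | mem x hx =>
    obtain ⟨f, hf, rfl⟩ := hx
    have hpos (i : Fin 2) : homogeneousComponent 0 (f i) = 0 := by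
      rw [homogeneousComponent_zero, ← constantCoeff_eq, (hf i).2, map_zero]
    have hlow (i : Fin 2) {a : ℕ} (ha : a < e) : homogeneousComponent a (f i) ∈ S :=
      hS a ha _ (homogeneousComponent_mem_invariants (hf i).1 a)
        (homogeneousComponent_isHomogeneous a (f i))
    rw [Fin.prod_univ_two, homogeneousComponent_mul]
    refine Subalgebra.sum_mem _ fun ac hac => ?_
    rw [Finset.HasAntidiagonal.mem_antidiagonal] at hac
    rcases Nat.eq_zero_or_pos ac.1 with ha | ha
    · simp [ha, hpos]
    rcases Nat.eq_zero_or_pos ac.2 with hc | hc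
    · simp [hc, hpos]
    exact mul_mem (hlow 0 (by omega)) (hlow 1 (by omega))
  | zero => simp
  | add x y _ _ hx hy => simpa using add_mem hx hy
  | smul a x _ hx => simpa using Subalgebra.smul_mem S hx a

theorem genLE_of_isHomogeneous_mem_prodPow_two {d : ℕ}
    (h : ∀ e, d < e → ∀ q ∈ invariants τ, q.IsHomogeneous e → q ∈ prodPow τ 2) :
    genLE τ d := by
  set S := Algebra.adjoin F {p : MvPolynomial κ F | p ∈ invariants τ ∧ p.totalDegree ≤ d}
  have hhom (e : ℕ) : ∀ q ∈ invariants τ, q.IsHomogeneous e → q ∈ S := by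
    induction e using Nat.strong_induction_on with
    | _ e ih =>
      intro q hq hqe
      rcases le_or_gt e d with hle | hlt
      · exact Algebra.subset_adjoin ⟨hq, hqe.totalDegree_le.trans hle⟩
      · rw [← homogeneousComponent_eq_self hqe]
        exact homogeneousComponent_mem_of_mem_prodPow_two ih (h e hlt q hq hqe)
  refine le_antisymm (Algebra.adjoin_le fun p hp => hp.1) fun q hq => ?_
  rw [← sum_homogeneousComponent q]
  exact Subalgebra.sum_mem _ fun e _ =>
    hhom e _ (homogeneousComponent_mem_invariants hq e) (homogeneousComponent_isHomogeneous e q)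

end Generation

section InducedModule

variable {G : Type} [Group G] {H : Subgroup G} {C : Set G}
  {V W : Type} [AddCommGroup V] [Module F V] [AddCommGroup W] [Module F W]
  {ρ : Representation F H V} {σ : Representation F G W} {ι : V →ₗ[F] W}

theorem map_range_le_range_of_mem (hequiv : ∀ h : H, σ h ∘ₗ ι = ι ∘ₗ ρ h) {t : G}
    (ht : t ∈ H) : (LinearMap.range ι).map (σ t) ≤ LinearMap.range ι := by
  rw [← LinearMap.range_comp, hequiv ⟨t, ht⟩]
  exact LinearMap.range_comp_le_range _ _

theorem map_range_le_biSup_ne (hequiv : ∀ h : H, σ h ∘ₗ ι = ι ∘ₗ ρ h)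
    (hC : Subgroup.IsComplement C (H : Set G)) (h1 : (1 : G) ∈ C) {g : G} (hg : g ∉ H) :
    (LinearMap.range ι).map (σ g) ≤
      ⨆ (c : C) (_ : c ≠ ⟨1, h1⟩), (LinearMap.range ι).map (σ c) := by
  obtain ⟨c, hcC, hc1, t, ht, rfl⟩ := hC.exists_ne_one_mul_eq h1 hg
  calc (LinearMap.range ι).map (σ (c * t))
      = ((LinearMap.range ι).map (σ t)).map (σ c) := by
        rw [map_mul, Module.End.mul_eq_comp, Submodule.map_comp]
    _ ≤ (LinearMap.range ι).map (σ c) := Submodule.map_mono (map_range_le_range_of_mem hequiv ht)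
    _ ≤ _ := le_iSup₂_of_le (f := fun (c : C) (_ : c ≠ ⟨1, h1⟩) => (LinearMap.range ι).map (σ c))
        ⟨c, hcC⟩ (fun h => hc1 (congrArg Subtype.val h)) le_rfl

theorem exists_equivariant_projection (hι : Function.Injective ι)
    (hequiv : ∀ h : H, σ h ∘ₗ ι = ι ∘ₗ ρ h)
    (hC : Subgroup.IsComplement C (H : Set G)) (h1 : (1 : G) ∈ C)
    (hindep : iSupIndep fun c : C => (LinearMap.range ι).map (σ c.1))
    (hspan : ⨆ c : C, (LinearMap.range ι).map (σ c.1) = ⊤) :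
    ∃ pr : W →ₗ[F] V, pr ∘ₗ ι = LinearMap.id ∧ (∀ h : H, pr ∘ₗ σ h = ρ h ∘ₗ pr) ∧
      ∀ g ∉ H, pr ∘ₗ σ g ∘ₗ ι = 0 := by
  set K := ⨆ (c : C) (_ : c ≠ ⟨1, h1⟩), (LinearMap.range ι).map (σ c)
  have hcompl : IsCompl (LinearMap.range ι) K := by
    simpa [Module.End.one_eq_id] using hindep.isCompl_biSup_ne hspan ⟨1, h1⟩
  set pr := LinearMap.ofIsCompl hcompl (LinearEquiv.ofInjective ι hι).symm.toLinearMap 0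
  have hprι (v : V) : pr (ι v) = v :=
    (LinearMap.ofIsCompl_apply_left hcompl (LinearEquiv.ofInjective ι hι v)).trans
      ((LinearEquiv.ofInjective ι hι).symm_apply_apply v)
  have hprK (w : W) (hw : w ∈ K) : pr w = 0 := LinearMap.ofIsCompl_apply_right hcompl ⟨w, hw⟩
  have hKinv (h : H) : K ≤ K.comap (σ h) := iSup₂_le fun c hc => by
    rw [← Submodule.map_le_iff_le_comap, ← Submodule.map_comp, ← Module.End.mul_eq_comp,
      ← map_mul]
    refine map_range_le_biSup_ne hequiv hC h1 fun hhc => hc (Subtype.ext ?_)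
    exact hC.eq_one_of_mem h1 c.2 (by simpa using H.mul_mem (H.inv_mem h.2) hhc)
  refine ⟨pr, LinearMap.ext hprι, fun h => ?_, fun g hg => LinearMap.ext fun v => hprK _ ?_⟩
  · refine LinearMap.ext_on_codisjoint hcompl.codisjoint ?_ fun w hw => ?_
    · rintro _ ⟨v, rfl⟩
      change pr (σ h (ι v)) = ρ h (pr (ι v))
      rw [← LinearMap.comp_apply (σ h), hequiv h, LinearMap.comp_apply, hprι, hprι]
    · simp [hprK w hw, hprK _ (hKinv h hw)]
  · exact map_range_le_biSup_ne hequiv hC h1 hg (Submodule.mem_map_of_mem ⟨v, rfl⟩)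

end InducedModule

section Transfer

variable {G : Type} [Group G] {H : Subgroup G}
  {κ κ' : Type} [Fintype κ] [DecidableEq κ] [Fintype κ'] [DecidableEq κ']
  {ρ : Representation F H (κ → F)} {σ : Representation F G (κ' → F)}
  {pr : (κ' → F) →ₗ[F] (κ → F)}

theorem algOf_mem_invariants (hpr : ∀ h : H, pr ∘ₗ σ h = ρ h ∘ₗ pr) {p : MvPolynomial κ' F}
    (hp : p ∈ invariants σ) : algOf pr p ∈ invariants ρ := fun h => by
  rw [← AlgHom.comp_apply, ← algOf_comp, ← hpr h, algOf_comp, AlgHom.comp_apply, hp h]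

variable [Fintype H] [Invertible (Fintype.card H : F)]

theorem averageMap_algOf_sub_mem_prodPow_two (hpr : ∀ h : H, pr ∘ₗ σ h = ρ h ∘ₗ pr) (g₀ : G)
    {z : MvPolynomial κ' F} (hz : z ∈ hilbertIdeal σ) :
    (polyRep ρ).averageMap (algOf pr z - algOf (pr ∘ₗ σ g₀) z) ∈ prodPow ρ 2 := by
  suffices ∀ r, (polyRep ρ).averageMap (algOf pr (r * z) - algOf (pr ∘ₗ σ g₀) (r * z)) ∈
      prodPow ρ 2 by simpa using this 1
  induction hz using Submodule.span_induction with
  | mem s hs =>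
    intro r
    have htwist : algOf (pr ∘ₗ σ g₀) s = algOf pr s := by
      rw [algOf_comp, AlgHom.comp_apply, hs.1 g₀]
    rw [map_mul, map_mul, htwist, ← sub_mul, mul_comm,
      averageMap_polyRep_mul_left ρ (algOf_mem_invariants hpr hs.1)]
    refine mul_mem_prodPow_two (algOf_mem_invariants hpr hs.1) ?_
      (averageMap_polyRep_mem_invariants ρ _) ?_
    · rw [constantCoeff_algOf, hs.2]
    · rw [constantCoeff_averageMap_polyRep, map_sub, constantCoeff_algOf, constantCoeff_algOf,
        sub_self]
  | zero => simp
  | add x y _ _ hx hy =>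
    intro r
    simpa only [mul_add, map_add, add_sub_add_comm] using add_mem (hx r) (hy r)
  | smul a x _ hx =>
    intro r
    simpa only [smul_eq_mul, ← mul_assoc] using hx (r * a)

theorem mem_prodPow_two_of_algOf_mem_hilbertIdeal {ι : (κ → F) →ₗ[F] (κ' → F)}
    (hprι : pr ∘ₗ ι = LinearMap.id) (hpr : ∀ h : H, pr ∘ₗ σ h = ρ h ∘ₗ pr) {g₀ : G}
    (hg₀ : pr ∘ₗ σ g₀ ∘ₗ ι = 0) {q : MvPolynomial κ F} (hq : q ∈ invariants ρ)
    (hιq : algOf ι q ∈ hilbertIdeal σ) : q ∈ prodPow ρ 2 := by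
  have hq₀ : constantCoeff q = 0 := by
    rw [← constantCoeff_algOf ι]
    exact constantCoeff_eq_zero_of_mem_hilbertIdeal hιq
  have hπ : algOf pr (algOf ι q) = q := by
    rw [← AlgHom.comp_apply, ← algOf_comp, hprι, algOf_id, AlgHom.id_apply]
  have hπ₀ : algOf (pr ∘ₗ σ g₀) (algOf ι q) = 0 := by
    rw [← AlgHom.comp_apply, ← algOf_comp, LinearMap.comp_assoc, hg₀, algOf_zero, hq₀, map_zero]
  have := averageMap_algOf_sub_mem_prodPow_two hpr g₀ hιq
  rwa [hπ, hπ₀, sub_zero, averageMap_polyRep_of_mem ρ hq] at this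

end Transfer

/-- `b(G, Ind_H^G V) ≥ β(H,V)` for a proper subgroup `H`. -/
theorem stmt10
    {G : Type} [Group G] [Fintype G]
    (hchar : (Fintype.card G : F) ≠ 0)
    (H : Subgroup G) {nV m : ℕ}
    (ρ : Representation F H (Fin nV → F))
    (σ : Representation F G (Fin m → F))
    (ι : (Fin nV → F) →ₗ[F] (Fin m → F)) (hι : Function.Injective ι)
    (hequiv : ∀ h : H, σ h ∘ₗ ι = ι ∘ₗ ρ h)
    (C : Set G) (hC : Subgroup.IsComplement C (H : Set G)) (h1 : (1:G) ∈ C)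
    (hindep : iSupIndep fun c : C => (LinearMap.range ι).map (σ c.1))
    (hspan : ⨆ c : C, (LinearMap.range ι).map (σ c.1) = ⊤)
    (hHG : H ≠ ⊤) :
    noether ρ ≤ coinvTop σ := by
  classical
  let := invertibleOfNonzero (H.natCast_card_ne_zero hchar)
  obtain ⟨pr, hprι, hpr, hout⟩ := exists_equivariant_projection hι hequiv hC h1 hindep hspan
  obtain ⟨g₀, hg₀⟩ : ∃ g, g ∉ H := by
    by_contra! h
    exact hHG ((Subgroup.eq_top_iff' H).mpr h)
  exact Nat.sInf_le <| genLE_of_isHomogeneous_mem_prodPow_two fun e he q hq hqe =>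
    mem_prodPow_two_of_algOf_mem_hilbertIdeal hprι hpr (hout g₀ hg₀) hq
      (mem_hilbertIdeal_of_coinvTop_lt σ (hqe.algOf ι) he)

end
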